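/- (Theorem 2, second part, M > 1) Assume unit link capacities (ℓ_{ji} = 1 for every link, so C_p = 1 for every path) and per-link thresholds θ_{ji} ∈ [0,1]. Let M > 1 be an integer, let p_1, …, p_{H_v} ∈ 𝒫 be pairwise internally vertex-disjoint (hence pairwise link-disjoint) source–destination paths with H_v ≥ 1, and for each k let θ_{p_k} = min over links (i,j) of p_k of θ_{ji}. Then the schedule assigning activation time min(M/H_v, θ_{p_k}) to each p_k and 0 to every other path is 1-2-1 feasible for parameter M, satisfies the passive-user constraint, and has rate Σ_{k=1}^{H_v} min(M/H_v, θ_{p_k}). -/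

import Mathlib

/-!
Common formalization of 1-2-1 mmWave networks (Dogan–Cardone–Fragouli).
A link is a directed edge `(i, j)` between natural-number node labels.
A path is identified with its (finite, nonempty) set of links.
-/

open Finset

abbrev Link := ℕ × ℕ

/-- Minimum of `f` over a finite set of links (0 on the empty set). -/
noncomputable def pathInf (f : Link → ℝ) (p : Finset Link) : ℝ :=
  if h : p.Nonempty then p.inf' h f else 0

/-- Maximum of `f` over a finite set of links (0 on the empty set). -/
noncomputable def pathSup (f : Link → ℝ) (p : Finset Link) : ℝ :=
  if h : p.Nonempty then p.sup' h f else 0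

/-- Capacity of a path: the minimum link capacity along it. -/
noncomputable def pathCap (ℓ : Link → ℝ) : Finset Link → ℝ := pathInf ℓ

/-- Induced activation time `λ_{ji}(x)` of link `e`. -/
noncomputable def linkTime (ℓ : Link → ℝ) (Ps : Finset (Finset Link))
    (x : Finset Link → ℝ) (e : Link) : ℝ :=
  ∑ p ∈ Ps with e ∈ p, x p * pathCap ℓ p / ℓ e

/-- Rate of a schedule `x`. -/
noncomputable def netRate (ℓ : Link → ℝ) (Ps : Finset (Finset Link))
    (x : Finset Link → ℝ) : ℝ :=
  ∑ p ∈ Ps, x p * pathCap ℓ p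

/-- 1-2-1 feasibility for `M = 1`: a nonnegative schedule whose induced link
activation times sum to at most 1 on the links leaving (resp. entering) each node. -/
def Feasible1 (E : Finset Link) (ℓ : Link → ℝ) (Ps : Finset (Finset Link))
    (x : Finset Link → ℝ) : Prop :=
  (∀ p ∈ Ps, 0 ≤ x p) ∧
  (∀ i : ℕ, ∑ e ∈ E with e.1 = i, linkTime ℓ Ps x e ≤ 1) ∧
  (∀ i : ℕ, ∑ e ∈ E with e.2 = i, linkTime ℓ Ps x e ≤ 1)

/-- The passive-user constraint: every link activation time is below its threshold. -/
def PassiveOK (E : Finset Link) (ℓ : Link → ℝ) (Ps : Finset (Finset Link))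
    (θ : Link → ℝ) (x : Finset Link → ℝ) : Prop :=
  ∀ e ∈ E, linkTime ℓ Ps x e ≤ θ e

/-- The 1-2-1 passive capacity: supremum of rates of feasible schedules
satisfying the passive-user constraint. -/
noncomputable def passiveCapacity (E : Finset Link) (ℓ : Link → ℝ)
    (Ps : Finset (Finset Link)) (θ : Link → ℝ) : ℝ :=
  sSup {r | ∃ x, Feasible1 E ℓ Ps x ∧ PassiveOK E ℓ Ps θ x ∧ netRate ℓ Ps x = r}

/-- The approximate capacity: supremum of rates of feasible schedules. -/
noncomputable def approxCapacity (E : Finset Link) (ℓ : Link → ℝ)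
    (Ps : Finset (Finset Link)) : ℝ :=
  sSup {r | ∃ x, Feasible1 E ℓ Ps x ∧ netRate ℓ Ps x = r}

/-- 1-2-1 feasibility for general beam parameter `M` on an `Nrelay`-relay network with
source node `0` and destination node `Nrelay + 1`. -/
def FeasibleM (Nrelay M : ℕ) (E : Finset Link) (ℓ : Link → ℝ)
    (Ps : Finset (Finset Link)) (x : Finset Link → ℝ) : Prop :=
  (∀ p ∈ Ps, 0 ≤ x p) ∧
  (∑ e ∈ E with e.1 = 0, linkTime ℓ Ps x e ≤ (M : ℝ)) ∧
  (∑ e ∈ E with e.2 = Nrelay + 1, linkTime ℓ Ps x e ≤ (M : ℝ)) ∧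
  (∀ i : ℕ, 1 ≤ i → i ≤ Nrelay →
    (∑ e ∈ E with e.1 = i, linkTime ℓ Ps x e ≤ 1) ∧
    (∑ e ∈ E with e.2 = i, linkTime ℓ Ps x e ≤ 1))

/-- Node `v` appears in (the link set of) path `q`. -/
def nodeIn (v : ℕ) (q : Finset Link) : Prop := ∃ e ∈ q, e.1 = v ∨ e.2 = v

/-!
With unit capacities the activation time of a link is just the total time of the chosen paths
through it. Link-disjointness leaves at most one chosen path on each link, so the passive
constraint reduces to `min (M / H_v) θ_p ≤ θ_e`. Vertex-disjointness leaves at most one chosen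
path through each relay, and a simple path uses one outgoing and one incoming link there, so each
relay constraint is a single term `≤ θ_p ≤ 1`. At the source and the destination each of the
`H_v` paths uses one link, contributing at most `M / H_v`.
-/

lemma Finset.sum_le_of_card_le_one {ι N : Type*} [AddCommMonoid N] [PartialOrder N]
    [IsOrderedAddMonoid N] {s : Finset ι} {f : ι → N} {c : N} (hs : #s ≤ 1) (hc : 0 ≤ c)
    (hf : ∀ i ∈ s, f i ≤ c) : ∑ i ∈ s, f i ≤ c :=
  (sum_le_card_nsmul s f c hf).trans <| (nsmul_le_nsmul_left hc hs).trans_eq (one_nsmul c)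

lemma Finset.sum_sum_filter_mem_eq {ι α N : Type*} [Fintype ι] [DecidableEq α] [AddCommMonoid N]
    {A : Finset α} {p : ι → Finset α} (y : ι → N) (hA : ∀ k, #(A ∩ p k) ≤ 1) :
    ∑ e ∈ A, ∑ k with e ∈ p k, y k = ∑ k with (A ∩ p k).Nonempty, y k := by
  simp only [sum_filter]
  rw [sum_comm]
  refine sum_congr rfl fun k _ => ?_
  rw [← sum_filter, filter_mem_eq_inter, sum_const]
  rcases (A ∩ p k).eq_empty_or_nonempty with h | h
  · simp [h]
  · rw [if_pos h, show #(A ∩ p k) = 1 by have := card_pos.2 h; grind [hA k], one_nsmul]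

lemma Finset.sum_eq_sum_comp_of_eq_zero_off_range {ι α N : Type*} [Fintype ι] [AddCommMonoid N]
    {s : Finset α} {p : ι → α} {g : α → N} (hinj : Function.Injective p) (hps : ∀ k, p k ∈ s)
    (hg : ∀ a ∉ Set.range p, g a = 0) : ∑ a ∈ s, g a = ∑ k, g (p k) :=
  (sum_of_injOn p hinj.injOn (fun k _ => hps k)
    (fun a _ ha => hg a fun ⟨k, hk⟩ => ha ⟨k, mem_univ k, hk⟩) fun _ _ => rfl).symm

lemma sum_filter_le_of_le_div_card {ι : Type*} [Fintype ι] {y : ι → ℝ} {c : ℝ} (Q : ι → Prop)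
    [DecidablePred Q] (hc : 0 ≤ c) (hy₀ : ∀ k, 0 ≤ y k) (hy : ∀ k, y k ≤ c / Fintype.card ι) :
    ∑ k with Q k, y k ≤ c :=
  calc ∑ k with Q k, y k ≤ ∑ k, y k :=
        sum_le_sum_of_subset_of_nonneg (filter_subset _ _) fun k _ _ => hy₀ k
    _ ≤ ∑ _k : ι, c / Fintype.card ι := sum_le_sum fun k _ => hy k
    _ ≤ c := by
        rw [sum_const, card_univ, nsmul_eq_mul]
        rcases eq_or_ne (Fintype.card ι : ℝ) 0 with h | h
        · simpa [h] using hc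
        · rw [mul_div_cancel₀ _ h]

lemma pathInf_le {f : Link → ℝ} {q : Finset Link} {e : Link} (he : e ∈ q) :
    pathInf f q ≤ f e := by
  rw [pathInf, dif_pos ⟨e, he⟩]
  exact inf'_le f he

lemma le_pathInf {f : Link → ℝ} {q : Finset Link} {c : ℝ} (hq : q.Nonempty)
    (h : ∀ e ∈ q, c ≤ f e) : c ≤ pathInf f q := by
  rw [pathInf, dif_pos hq]
  exact le_inf' hq f h

lemma pathCap_eq_one {ℓ : Link → ℝ} {q : Finset Link} (hq : q.Nonempty)
    (h : ∀ e ∈ q, ℓ e = 1) : pathCap ℓ q = 1 :=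
  let ⟨e, he⟩ := hq
  le_antisymm ((pathInf_le he).trans (h e he).le) (le_pathInf hq fun e he => (h e he).ge)

section Schedule

variable {ℓ : Link → ℝ} {Ps : Finset (Finset Link)} {x : Finset Link → ℝ} {E : Finset Link}

lemma linkTime_eq_sum_of_pathCap_eq_one (hcap : ∀ q ∈ Ps, pathCap ℓ q = 1) {e : Link}
    (he : ℓ e = 1) : linkTime ℓ Ps x e = ∑ q ∈ Ps with e ∈ q, x q :=
  sum_congr rfl fun q hq => by rw [hcap q (mem_filter.1 hq).1, he, mul_one, div_one]

lemma netRate_eq_sum_of_pathCap_eq_one (hcap : ∀ q ∈ Ps, pathCap ℓ q = 1) :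
    netRate ℓ Ps x = ∑ q ∈ Ps, x q :=
  sum_congr rfl fun q hq => by rw [hcap q hq, mul_one]

variable {ι : Type*} [Fintype ι] {p : ι → Finset Link}

lemma linkTime_eq_sum_index (hcap : ∀ q ∈ Ps, pathCap ℓ q = 1) (hinj : Function.Injective p)
    (hpPs : ∀ k, p k ∈ Ps) (hx : ∀ q ∉ Set.range p, x q = 0) {e : Link} (he : ℓ e = 1) :
    linkTime ℓ Ps x e = ∑ k with e ∈ p k, x (p k) := by
  rw [linkTime_eq_sum_of_pathCap_eq_one hcap he, sum_filter, sum_filter]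
  exact sum_eq_sum_comp_of_eq_zero_off_range hinj hpPs fun q hq => by simp [hx q hq]

lemma netRate_eq_sum_index (hcap : ∀ q ∈ Ps, pathCap ℓ q = 1) (hinj : Function.Injective p)
    (hpPs : ∀ k, p k ∈ Ps) (hx : ∀ q ∉ Set.range p, x q = 0) :
    netRate ℓ Ps x = ∑ k, x (p k) := by
  rw [netRate_eq_sum_of_pathCap_eq_one hcap]
  exact sum_eq_sum_comp_of_eq_zero_off_range hinj hpPs hx

lemma card_filter_mem_le_one (hdisj : ∀ k l, k ≠ l → Disjoint (p k) (p l)) (e : Link) :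
    #{k | e ∈ p k} ≤ 1 :=
  card_le_one.2 fun k hk l hl => by_contra fun hkl =>
    disjoint_left.1 (hdisj k l hkl) (mem_filter.1 hk).2 (mem_filter.1 hl).2

lemma sum_filter_exists_le_one {v : ℕ} {P : Link → Prop} [DecidablePred P] {y : ι → ℝ}
    (hP : ∀ e, P e → e.1 = v ∨ e.2 = v)
    (hv : ∀ k l, k ≠ l → ¬(nodeIn v (p k) ∧ nodeIn v (p l))) (hy : ∀ k, y k ≤ 1) :
    ∑ k with ∃ e ∈ p k, P e, y k ≤ 1 := by
  have hnode {k} (hk : k ∈ ({k | ∃ e ∈ p k, P e} : Finset ι)) : nodeIn v (p k) :=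
    let ⟨e, he, hPe⟩ := (mem_filter.1 hk).2
    ⟨e, he, hP e hPe⟩
  refine sum_le_of_card_le_one (card_le_one.2 fun k hk l hl => ?_) zero_le_one fun k _ => hy k
  exact by_contra fun hkl => hv k l hkl ⟨hnode hk, hnode hl⟩

lemma sum_filter_linkTime_eq (hcap : ∀ q ∈ Ps, pathCap ℓ q = 1) (hinj : Function.Injective p)
    (hpPs : ∀ k, p k ∈ Ps) (hx : ∀ q ∉ Set.range p, x q = 0) (hℓ : ∀ e ∈ E, ℓ e = 1)
    (hpE : ∀ k, p k ⊆ E) (P : Link → Prop) [DecidablePred P] (hP : ∀ k, #{e ∈ p k | P e} ≤ 1) :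
    ∑ e ∈ E with P e, linkTime ℓ Ps x e = ∑ k with ∃ e ∈ p k, P e, x (p k) := by
  rw [sum_congr rfl fun e he =>
    linkTime_eq_sum_index hcap hinj hpPs hx (hℓ e (mem_filter.1 he).1)]
  rw [sum_sum_filter_mem_eq _ fun k => (card_le_card fun e he => ?_).trans (hP k)]
  · refine sum_congr (filter_congr fun k _ => ?_) fun _ _ => rfl
    exact ⟨fun ⟨e, he⟩ => by grind, fun ⟨e, he, hPe⟩ => ⟨e, by grind⟩⟩
  · grind

lemma feasibleM_of_pairwise_disjoint {Nrelay M : ℕ} (hcap : ∀ q ∈ Ps, pathCap ℓ q = 1)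
    (hinj : Function.Injective p) (hpPs : ∀ k, p k ∈ Ps) (hx : ∀ q ∉ Set.range p, x q = 0)
    (hℓ : ∀ e ∈ E, ℓ e = 1) (hpE : ∀ k, p k ⊆ E)
    (hsimple : ∀ k i, #{e ∈ p k | e.1 = i} ≤ 1 ∧ #{e ∈ p k | e.2 = i} ≤ 1)
    (hvdisj : ∀ k l, k ≠ l → ∀ v : ℕ, v ≠ 0 → v ≠ Nrelay + 1 →
      ¬(nodeIn v (p k) ∧ nodeIn v (p l)))
    (hx₀ : ∀ k, 0 ≤ x (p k)) (hxM : ∀ k, x (p k) ≤ M / Fintype.card ι)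
    (hx₁ : ∀ k, x (p k) ≤ 1) :
    FeasibleM Nrelay M E ℓ Ps x := by
  have hnode := sum_filter_linkTime_eq hcap hinj hpPs hx hℓ hpE
  refine ⟨fun q _ => ?_, ?_, ?_, fun i hi hiN => ⟨?_, ?_⟩⟩
  · by_cases hq : q ∈ Set.range p
    · obtain ⟨k, rfl⟩ := hq
      exact hx₀ k
    · exact (hx q hq).ge
  · rw [hnode _ fun k => (hsimple k 0).1]
    exact sum_filter_le_of_le_div_card _ M.cast_nonneg hx₀ hxM
  · rw [hnode _ fun k => (hsimple k _).2]
    exact sum_filter_le_of_le_div_card _ M.cast_nonneg hx₀ hxM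
  · rw [hnode _ fun k => (hsimple k i).1]
    exact sum_filter_exists_le_one (fun e h => .inl h)
      (fun k l hkl => hvdisj k l hkl i (by omega) (by omega)) hx₁
  · rw [hnode _ fun k => (hsimple k i).2]
    exact sum_filter_exists_le_one (fun e h => .inr h)
      (fun k l hkl => hvdisj k l hkl i (by omega) (by omega)) hx₁

lemma passiveOK_of_pairwise_disjoint {θ : Link → ℝ} (hcap : ∀ q ∈ Ps, pathCap ℓ q = 1)
    (hinj : Function.Injective p) (hpPs : ∀ k, p k ∈ Ps) (hx : ∀ q ∉ Set.range p, x q = 0)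
    (hℓ : ∀ e ∈ E, ℓ e = 1) (hldisj : ∀ k l, k ≠ l → Disjoint (p k) (p l))
    (hθ : ∀ e ∈ E, 0 ≤ θ e) (hxθ : ∀ k, ∀ e ∈ p k, x (p k) ≤ θ e) :
    PassiveOK E ℓ Ps θ x := fun e he => by
  rw [linkTime_eq_sum_index hcap hinj hpPs hx (hℓ e he)]
  exact sum_le_of_card_le_one (card_filter_mem_le_one hldisj e) (hθ e he)
    fun k hk => hxθ k e (mem_filter.1 hk).2

end Schedule

theorem stmt14_general (Nrelay : ℕ) (E : Finset Link) (ℓ θ : Link → ℝ)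
    (hℓ : ∀ e ∈ E, ℓ e = 1) (Ps : Finset (Finset Link))
    (hpaths : ∀ q ∈ Ps, q.Nonempty ∧ q ⊆ E)
    (hsimple : ∀ q ∈ Ps, ∀ i : ℕ,
      ({e ∈ q | e.1 = i}).card ≤ 1 ∧ ({e ∈ q | e.2 = i}).card ≤ 1)
    (hθ : ∀ e ∈ E, 0 ≤ θ e ∧ θ e ≤ 1)
    (M : ℕ)
    (Hv : ℕ) (p : Fin Hv → Finset Link)
    (hpPs : ∀ k, p k ∈ Ps) (hinj : Function.Injective p)
    (hvdisj : ∀ k l, k ≠ l → ∀ v : ℕ, v ≠ 0 → v ≠ Nrelay + 1 →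
      ¬(nodeIn v (p k) ∧ nodeIn v (p l)))
    (hldisj : ∀ k l, k ≠ l → Disjoint (p k) (p l)) :
    FeasibleM Nrelay M E ℓ Ps
      (fun q => if ∃ k, q = p k then min ((M : ℝ) / (Hv : ℝ)) (pathInf θ q) else 0) ∧
    PassiveOK E ℓ Ps θ
      (fun q => if ∃ k, q = p k then min ((M : ℝ) / (Hv : ℝ)) (pathInf θ q) else 0) ∧
    netRate ℓ Ps
      (fun q => if ∃ k, q = p k then min ((M : ℝ) / (Hv : ℝ)) (pathInf θ q) else 0)
      = ∑ k : Fin Hv, min ((M : ℝ) / (Hv : ℝ)) (pathInf θ (p k)) := by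
  set x : Finset Link → ℝ :=
    fun q => if ∃ k, q = p k then min ((M : ℝ) / (Hv : ℝ)) (pathInf θ q) else 0
  have hxp (k : Fin Hv) : x (p k) = min ((M : ℝ) / Hv) (pathInf θ (p k)) := if_pos ⟨k, rfl⟩
  have hx : ∀ q ∉ Set.range p, x q = 0 := fun q hq => if_neg fun ⟨k, hk⟩ => hq ⟨k, hk.symm⟩
  have hpE (k : Fin Hv) : p k ⊆ E := (hpaths _ (hpPs k)).2
  have hcap : ∀ q ∈ Ps, pathCap ℓ q = 1 := fun q hq =>
    pathCap_eq_one (hpaths q hq).1 fun e he => hℓ e ((hpaths q hq).2 he)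
  have hx₀ (k : Fin Hv) : 0 ≤ x (p k) := hxp k ▸
    le_min (by positivity) (le_pathInf (hpaths _ (hpPs k)).1 fun e he => (hθ e (hpE k he)).1)
  have hxθ (k : Fin Hv) (e : Link) (he : e ∈ p k) : x (p k) ≤ θ e :=
    hxp k ▸ (min_le_right _ _).trans (pathInf_le he)
  have hx₁ (k : Fin Hv) : x (p k) ≤ 1 :=
    let ⟨e, he⟩ := (hpaths _ (hpPs k)).1
    (hxθ k e he).trans (hθ e (hpE k he)).2
  refine ⟨feasibleM_of_pairwise_disjoint hcap hinj hpPs hx hℓ hpE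
      (fun k => hsimple _ (hpPs k)) hvdisj hx₀ (fun k => by simp [hxp]) hx₁,
    passiveOK_of_pairwise_disjoint hcap hinj hpPs hx hℓ hldisj (fun e he => (hθ e he).1) hxθ, ?_⟩
  rw [netRate_eq_sum_index hcap hinj hpPs hx]
  exact sum_congr rfl fun k _ => hxp k

/-- Theorem 2, second part, M > 1: with unit link capacities, given
`H_v` pairwise internally vertex-disjoint (hence link-disjoint) paths, the schedule
giving path `p_k` activation time `min(M/H_v, θ_{p_k})` is 1-2-1 feasible for
parameter M, satisfies the passive-user constraint, and has rate
`Σ_k min(M/H_v, θ_{p_k})`. -/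
theorem stmt14 (Nrelay : ℕ) (E : Finset Link) (hE : E.Nonempty) (ℓ θ : Link → ℝ)
    (hℓ : ∀ e ∈ E, ℓ e = 1) (Ps : Finset (Finset Link)) (hPs : Ps.Nonempty)
    (hpaths : ∀ q ∈ Ps, q.Nonempty ∧ q ⊆ E)
    (hsimple : ∀ q ∈ Ps, ∀ i : ℕ,
      ({e ∈ q | e.1 = i}).card ≤ 1 ∧ ({e ∈ q | e.2 = i}).card ≤ 1)
    (hθ : ∀ e ∈ E, 0 ≤ θ e ∧ θ e ≤ 1)
    (M : ℕ) (hM : 1 < M)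
    (Hv : ℕ) (hHv : 0 < Hv) (p : Fin Hv → Finset Link)
    (hpPs : ∀ k, p k ∈ Ps) (hinj : Function.Injective p)
    (hvdisj : ∀ k l, k ≠ l → ∀ v : ℕ, v ≠ 0 → v ≠ Nrelay + 1 →
      ¬(nodeIn v (p k) ∧ nodeIn v (p l)))
    (hldisj : ∀ k l, k ≠ l → Disjoint (p k) (p l)) :
    FeasibleM Nrelay M E ℓ Ps
      (fun q => if ∃ k, q = p k then min ((M : ℝ) / (Hv : ℝ)) (pathInf θ q) else 0) ∧
    PassiveOK E ℓ Ps θ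
      (fun q => if ∃ k, q = p k then min ((M : ℝ) / (Hv : ℝ)) (pathInf θ q) else 0) ∧
    netRate ℓ Ps
      (fun q => if ∃ k, q = p k then min ((M : ℝ) / (Hv : ℝ)) (pathInf θ q) else 0)
      = ∑ k : Fin Hv, min ((M : ℝ) / (Hv : ℝ)) (pathInf θ (p k)) :=
  stmt14_general Nrelay E ℓ θ hℓ Ps hpaths hsimple hθ M Hv p hpPs hinj hvdisj hldisj
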